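/- Let Q be a (d−1)-ary relation on {0,…,n−1} and let (T_α, Q_α)_{α ∈ Perm(d)} be a d-simulation of Q, i.e., families of d-ary relations satisfying: (A1) T_id(x) = Q(x⁻) whenever [x]_d = 0; (A2) T_{α.ij}(x) = T_{α.ij}(x_{(ij)}); (A3) T_α(x) = T_{α.ij}(x) whenever [x]_i = 0; (A4) Q_id(x) = Q(x⁻); (A5) Q_{α.ij}(x) = T_{α.ij}(x) whenever [x]_j = 0; (A6) Q_{α.ij}(x) does not depend on [x]_j. Then for every x and every permutation α: Q_α(x_α) = Q(x⁻). -/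

import Mathlib

/-!
Every permutation on the chain sends the index `i` introduced last to the top index `d`.
Induction along the chain shows `T_α(x_α) = Q(x⁻)` whenever `x` vanishes at `α(i) = d`: for
`α = β.ij`, axiom A2 trades the swap in the permutation for a swap of the argument, turning
`x_α` into `x_β`, and A3 passes from `T_{β.ij}` back to `T_β`, since `x_β` vanishes at `i`.
For `Q_α` with `α = β.ij`, A6 allows zeroing the `j`-th coordinate of `x_α`, which is the
coordinate `d` of `x` and so leaves `x⁻` unchanged; then A5 reduces `Q_α` to `T_α`.
-/

/-- `Reaches d α i`: α is reached along the chain of alternated factorizations, its last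
transposition having introduced i (identity reached with the top index). Here the
ambient dimension is D = d + 1, so relations T, Q_α are D-ary and Q is (D-1)-ary. -/
inductive Reaches (d : ℕ) : Equiv.Perm (Fin (d + 1)) → Fin (d + 1) → Prop
  | base : Reaches d 1 (Fin.last d)
  | step {α : Equiv.Perm (Fin (d + 1))} {i j : Fin (d + 1)} :
      Reaches d α i → j ≠ i → Reaches d (α * Equiv.swap i j) j

theorem Reaches.apply_eq_last {d : ℕ} {α : Equiv.Perm (Fin (d + 1))} {i : Fin (d + 1)}
    (h : Reaches d α i) : α i = Fin.last d := by
  induction h with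
  | base => rfl
  | step _ _ ih => simpa [Equiv.Perm.mul_apply] using ih

section Simulation

variable {d : ℕ} {X : Type*} {z : X} {Q : (Fin d → X) → Prop}
  {T QF : Equiv.Perm (Fin (d + 1)) → (Fin (d + 1) → X) → Prop}

theorem simulation_T_comp_iff
    (A1 : ∀ x, x (Fin.last d) = z → (T 1 x ↔ Q (x ∘ Fin.castSucc)))
    (A2 : ∀ α i j, Reaches d α i → j ≠ i → ∀ x,
      (T (α * Equiv.swap i j) x ↔ T (α * Equiv.swap i j) (x ∘ ⇑(Equiv.swap i j))))
    (A3 : ∀ α i j, Reaches d α i → j ≠ i → ∀ x, x i = z →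
      (T α x ↔ T (α * Equiv.swap i j) x))
    {α : Equiv.Perm (Fin (d + 1))} {i : Fin (d + 1)} (h : Reaches d α i)
    (x : Fin (d + 1) → X) (hx : x (α i) = z) :
    T α (x ∘ α) ↔ Q (x ∘ Fin.castSucc) := by
  induction h with
  | base => exact A1 x hx
  | @step β i j hβ hji ih =>
    have hxβ : (x ∘ β) i = z := by simpa using hx
    have hswap : (x ∘ ⇑(β * Equiv.swap i j)) ∘ ⇑(Equiv.swap i j) = x ∘ β := by
      ext k; simp
    rw [A2 β i j hβ hji, hswap, ← A3 β i j hβ hji _ hxβ]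
    exact ih hxβ

theorem simulation_QF_comp_iff
    (hT : ∀ α i, Reaches d α i → ∀ x, x (α i) = z → (T α (x ∘ α) ↔ Q (x ∘ Fin.castSucc)))
    (A4 : ∀ x, QF 1 x ↔ Q (x ∘ Fin.castSucc))
    (A5 : ∀ α i j, Reaches d α i → j ≠ i → ∀ x, x j = z →
      (QF (α * Equiv.swap i j) x ↔ T (α * Equiv.swap i j) x))
    (A6 : ∀ α i j, Reaches d α i → j ≠ i → ∀ x v,
      (QF (α * Equiv.swap i j) x ↔ QF (α * Equiv.swap i j) (Function.update x j v)))
    {α : Equiv.Perm (Fin (d + 1))} {i : Fin (d + 1)} (h : Reaches d α i)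
    (x : Fin (d + 1) → X) :
    QF α (x ∘ α) ↔ Q (x ∘ Fin.castSucc) := by
  cases h with
  | base => exact A4 x
  | @step β k i hβ hik =>
    set α := β * Equiv.swap k i
    have hα : Reaches d α i := hβ.step hik
    set x' := Function.update x (α i) z
    have hx'α : Function.update (x ∘ α) i z = x' ∘ α :=
      (Function.update_comp_eq_of_injective x α.injective i z).symm
    have hx'_castSucc : x' ∘ Fin.castSucc = x ∘ Fin.castSucc := by
      refine Function.update_comp_eq_of_notMem_range x z ?_
      rw [hα.apply_eq_last, Fin.range_castSucc]
      simp
    rw [A6 β k i hβ hik _ z, hx'α, A5 β k i hβ hik _ (by simp [x']), ← hx'_castSucc]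
    exact hT α i hα x' (Function.update_self _ _ _)

end Simulation

/-- if (T_α, Q_α) is a d-simulation of Q (axioms A1–A6), then
Q_α(x_α) = Q(x⁻) for every tuple x and every permutation α along the chain. -/
theorem stmt16 (d n : ℕ) (hn : 0 < n)
    (Q : (Fin d → Fin n) → Prop)
    (T QF : Equiv.Perm (Fin (d + 1)) → (Fin (d + 1) → Fin n) → Prop)
    (A1 : ∀ x, x (Fin.last d) = ⟨0, hn⟩ → (T 1 x ↔ Q (x ∘ Fin.castSucc)))
    (A2 : ∀ α i j, Reaches d α i → j ≠ i → ∀ x,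
      (T (α * Equiv.swap i j) x ↔ T (α * Equiv.swap i j) (x ∘ ⇑(Equiv.swap i j))))
    (A3 : ∀ α i j, Reaches d α i → j ≠ i → ∀ x, x i = ⟨0, hn⟩ →
      (T α x ↔ T (α * Equiv.swap i j) x))
    (A4 : ∀ x, QF 1 x ↔ Q (x ∘ Fin.castSucc))
    (A5 : ∀ α i j, Reaches d α i → j ≠ i → ∀ x, x j = ⟨0, hn⟩ →
      (QF (α * Equiv.swap i j) x ↔ T (α * Equiv.swap i j) x))
    (A6 : ∀ α i j, Reaches d α i → j ≠ i → ∀ x v,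
      (QF (α * Equiv.swap i j) x ↔ QF (α * Equiv.swap i j) (Function.update x j v))) :
    ∀ (x : Fin (d + 1) → Fin n) (α : Equiv.Perm (Fin (d + 1))),
      (∃ i, Reaches d α i) → (QF α (x ∘ ⇑α) ↔ Q (x ∘ Fin.castSucc)) := by
  rintro x α ⟨i, h⟩
  exact simulation_QF_comp_iff (fun _ _ hα => simulation_T_comp_iff A1 A2 A3 hα) A4 A5 A6 h x
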